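/- arXiv:2108.03571 — 3 statements merged into one kernel-verified Lean document; each statement's English description precedes it below -/
import Mathlib

section
/- Let n ≥ 1 and let D be the unique ℤ-linear derivation on the polynomial ring ℤ[X_1,…,X_n] with D(X_1) = n and D(X_k) = (n−k+1)·X_{k−1} for 2 ≤ k ≤ n. Then for every polynomial F ∈ ℤ[X_1,…,X_n], substituting the elementary symmetric polynomials e_1,…,e_n of ℤ[v_1,…,v_n] for the variables X_1,…,X_n intertwines D with the formal divergence: ∇(F(e_1,…,e_n)) = (D F)(e_1,…,e_n), where ∇ = ∑_{i=1}^n ∂/∂v_i on ℤ[v_1,…,v_n]. -/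
open MvPolynomial
section Aux
open Finset

lemma pderiv_mono (n : ℕ) (i : Fin n) (t : Finset (Fin n)) :
    pderiv i (monomial (∑ x ∈ t, Finsupp.single x 1) (1:ℤ)) =
      if i ∈ t then monomial (∑ x ∈ t.erase i, Finsupp.single x 1) (1:ℤ) else 0 := by
  rw [pderiv_monomial]
  have hval : (∑ x ∈ t, Finsupp.single x (1:ℕ)) i = if i ∈ t then 1 else 0 := by
    rw [Finsupp.finset_sum_apply]
    simp [Finsupp.single_apply, Finset.sum_ite_eq', eq_comm]
  by_cases h : i ∈ t
  · rw [hval]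
    simp only [h, if_true, mul_one]
    congr 1
    rw [← Finset.add_sum_erase _ _ h]
    ext a
    simp [Finsupp.single_apply]
  · rw [hval]
    simp [h]

lemma div_esymm (n k : ℕ) (hk : 1 ≤ k) :
    ∑ i : Fin n, pderiv i (esymm (Fin n) ℤ k)
      = (n + 1 - k) • esymm (Fin n) ℤ (k - 1) := by
  simp_rw [esymm_eq_sum_monomial, map_sum, pderiv_mono]
  rw [Finset.sum_comm]
  simp_rw [Finset.sum_ite_mem, Finset.univ_inter]
  trans ∑ p ∈ (powersetCard k univ).sigma (fun t => t),
      monomial (∑ x ∈ p.1.erase p.2, Finsupp.single x 1) (1:ℤ)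
  · rw [Finset.sum_sigma]
  rw [Finset.sum_nbij' (i := fun p : (_ : Finset (Fin n)) × Fin n => (⟨p.1.erase p.2, p.2⟩ :
        (_ : Finset (Fin n)) × Fin n))
      (j := fun p => ⟨insert p.2 p.1, p.2⟩)
      (t := (powersetCard (k-1) univ).sigma fun s => sᶜ)
      (g := fun p => monomial (∑ x ∈ p.1, Finsupp.single x 1) (1:ℤ))]
  · rw [Finset.sum_sigma, Finset.smul_sum]
    refine Finset.sum_congr rfl fun s hs => ?_
    simp only []
    rw [Finset.sum_const, Finset.card_compl, Fintype.card_fin,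
      (mem_powersetCard_univ.mp hs)]
    congr 1
    omega
  · rintro ⟨t, i⟩ h
    simp only [mem_sigma, mem_powersetCard_univ] at h ⊢
    exact ⟨by rw [card_erase_of_mem h.2, h.1], by simp⟩
  · rintro ⟨s, i⟩ h
    simp only [mem_sigma, mem_powersetCard_univ, mem_compl] at h ⊢
    exact ⟨by rw [card_insert_of_notMem h.2, h.1, Nat.sub_add_cancel hk], mem_insert_self _ _⟩
  · rintro ⟨t, i⟩ h
    simp only [mem_sigma, mem_powersetCard_univ] at h
    simp [insert_erase h.2]
  · rintro ⟨s, i⟩ h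
    simp only [mem_sigma, mem_powersetCard_univ, mem_compl] at h
    simp [erase_insert h.2]
  · rintro ⟨t, i⟩ h
    rfl

end Aux

/-- Let `n ≥ 1` and let `D` be the (unique) ℤ-linear derivation on `ℤ[X_1, …, X_n]` with
`D(X_1) = n` and `D(X_k) = (n - k + 1) · X_{k-1}` for `2 ≤ k ≤ n` (here the variable `X_k`
is indexed by `k - 1 : Fin n`).  Then substituting the elementary symmetric polynomials
`e_1, …, e_n` of `ℤ[v_1, …, v_n]` for the variables `X_1, …, X_n` intertwines `D` with the
formal divergence `∇ = ∑_{i=1}^n ∂/∂v_i`:  `∇(F(e_1, …, e_n)) = (D F)(e_1, …, e_n)`. -/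
theorem formal_divergence_intertwines (n : ℕ) (hn : 1 ≤ n)
    (D : Derivation ℤ (MvPolynomial (Fin n) ℤ) (MvPolynomial (Fin n) ℤ))
    (hD1 : D (X (⟨0, hn⟩ : Fin n)) = (n : MvPolynomial (Fin n) ℤ))
    (hDk : ∀ j : Fin n, j.val ≠ 0 →
      D (X j) = (n - j.val) • X (⟨j.val - 1, lt_of_le_of_lt (Nat.sub_le j.val 1) j.isLt⟩ : Fin n))
    (F : MvPolynomial (Fin n) ℤ) :
    ∑ i : Fin n,
        pderiv i (aeval (fun j : Fin n => esymm (Fin n) ℤ (j.val + 1)) F)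
      = aeval (fun j : Fin n => esymm (Fin n) ℤ (j.val + 1)) (D F) := by
  set e : Fin n → MvPolynomial (Fin n) ℤ := fun j => esymm (Fin n) ℤ (j.val + 1) with he
  have key : ∀ j : Fin n, ∑ i : Fin n, pderiv i (e j) = aeval e (D (X j)) := by
    intro j
    rw [he]
    rw [div_esymm n (j.val + 1) (by omega)]
    by_cases hj : j.val = 0
    · have hj' : j = ⟨0, hn⟩ := Fin.ext hj
      rw [hj', hD1]
      simp [hj, esymm_zero]
    · rw [hDk j hj, map_nsmul, aeval_X]
      simp only [Nat.add_sub_cancel]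
      have h1 : n + 1 - (j.val + 1) = n - j.val := by omega
      have h2 : (j.val - 1) + 1 = j.val := by omega
      simp [h1, h2]
  induction F using MvPolynomial.induction_on with
  | C a =>
      have : D (C a : MvPolynomial (Fin n) ℤ) = 0 := by
        have := D.map_algebraMap (a : ℤ)
        simpa [MvPolynomial.algebraMap_eq] using this
      simp [this, aeval_C]
  | add p q hp hq =>
      simp only [map_add, Finset.sum_add_distrib, hp, hq]
  | mul_X p j hp =>
      rw [map_mul, aeval_X, D.leibniz, map_add, smul_eq_mul, smul_eq_mul,
        map_mul, map_mul, aeval_X]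
      calc ∑ i : Fin n, pderiv i (aeval e p * e j)
          = ∑ i : Fin n, (aeval e p * pderiv i (e j) + e j * pderiv i (aeval e p)) := by
            refine Finset.sum_congr rfl fun i _ => ?_
            rw [(pderiv i).leibniz, smul_eq_mul, smul_eq_mul]
        _ = aeval e p * (∑ i : Fin n, pderiv i (e j)) + e j * ∑ i : Fin n, pderiv i (aeval e p) := by
            rw [Finset.sum_add_distrib, ← Finset.mul_sum, ← Finset.mul_sum]
        _ = _ := by rw [key j, hp]
end

section
/- Let p be a prime number and let n be a positive integer divisible by p (equivalently, n = p^r·m with r ≥ 1 and gcd(m,p) = 1). Then the binomial coefficient C(n−1, p−1) is not divisible by p. -/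
/-- If `p` is a prime and `n` is a positive integer divisible by `p`, then the binomial
coefficient `C(n-1, p-1)` is not divisible by `p`. -/
theorem choose_not_dvd_of_prime_dvd (p n : ℕ) (hp : p.Prime) (hn : 0 < n) (hpn : p ∣ n) :
    ¬ p ∣ (n - 1).choose (p - 1) := by
  haveI : Fact p.Prime := ⟨hp⟩
  obtain ⟨m, rfl⟩ := hpn
  have hm : 0 < m := Nat.pos_of_ne_zero (by rintro rfl; simp at hn)
  have hp2 := hp.two_le
  have key : (p * m - 1).choose (p - 1) ≡
      ((p * m - 1) % p).choose ((p - 1) % p) * ((p * m - 1) / p).choose ((p - 1) / p)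
      [MOD p] := Choose.choose_modEq_choose_mod_mul_choose_div_nat
  have hrep : p * m - 1 = p * (m - 1) + (p - 1) := by
    have : p * m = p * (m - 1) + p := by
      conv_lhs => rw [← Nat.sub_add_cancel hm]
      ring
    omega
  have h1 : (p * m - 1) % p = p - 1 := by
    rw [hrep, Nat.mul_add_mod, Nat.mod_eq_of_lt (by omega)]
  have h2 : (p - 1) % p = p - 1 := Nat.mod_eq_of_lt (by omega)
  have h3 : (p - 1) / p = 0 := Nat.div_eq_of_lt (by omega)
  rw [h1, h2, h3, Nat.choose_self, Nat.choose_zero_right, mul_one] at key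
  intro hdvd
  have := (Nat.modEq_zero_iff_dvd).mpr hdvd
  have : 1 ≡ 0 [MOD p] := key.symm.trans this
  have := (Nat.modEq_zero_iff_dvd).mp this
  simp at this
  omega
end

section
/- Let p be an odd prime. On the polynomial ring 𝔽_p[X_1,…,X_p] over the field 𝔽_p = ℤ/p, let D̄ be the unique derivation with D̄(X_1) = 0 and D̄(X_k) = (1−k)·X_{k−1} for 2 ≤ k ≤ p, and grade the ring by assigning X_k the weight k. Then the image under D̄ of the 𝔽_p-submodule of weighted-homogeneous polynomials of weighted degree p+1 is exactly the 𝔽_p-span of the weighted-degree-p monomials other than X_p; equivalently, a weighted-homogeneous polynomial f of weighted degree p lies in D̄(weighted degree p+1 part) if and only if the coefficient of the monomial X_p in f is zero. -/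
/-!
Write `x_j = X_{j+1}` (`j : Fin p`), so that `D̄ x_j = -j · x_{j-1}`: on a monomial, `D̄` moves
one unit of exponent from an index `i` down to `i - 1`, with coefficient `-i` times that exponent.
No such move can produce `x_{p-1} = X_p`, which gives one inclusion.

Conversely, let `x^d` have weight `p`, `x^d ≠ x_{p-1}`, and let `k` be the largest index in `d`;
then `k + 1 < p`. Moving one unit of `d` from `k` up to `k + 1` gives `μ` of weight `p + 1` with
`D̄ x^μ = -(k+1) x^d + ∑_{1 ≤ i ≤ k} c_i x^{ν_i}`, and `-(k+1)` is a unit mod `p`. Each `ν_i`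
is `d` with a unit moved up from `k` to `k + 1` and one moved down from `i` to `i - 1`, so the
energy `∑_j d_j · j (p - j)` of `ν_i` is smaller than that of `d`, because `j ↦ j (p - j)` is
strictly concave. Induction on the energy concludes.
-/

open MvPolynomial Finsupp

theorem MvPolynomial.derivation_monomial_one {R σ : Type*} [CommSemiring R] [DecidableEq σ]
    {D : Derivation R (MvPolynomial σ R) (MvPolynomial σ R)} {c : σ → R} {τ : σ → σ}
    (hD : ∀ i, D (X i) = C (c i) * X (τ i)) (s : σ →₀ ℕ) :
    D (monomial s 1) =
      ∑ i ∈ s.support, monomial (s - single i 1 + single (τ i) 1) (s i * c i) := by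
  have hD' : D = mkDerivation R fun i => D (X i) := derivation_ext fun i => by rw [mkDerivation_X]
  rw [hD', mkDerivation_monomial, one_smul, Finsupp.sum]
  refine Finset.sum_congr rfl fun i _ => ?_
  rw [hD, smul_eq_mul, X, C_mul_monomial, monomial_mul, mul_one]

theorem MvPolynomial.monomial_mem_of_monomial_one_mem {R σ : Type*} [CommSemiring R]
    {M : Submodule R (MvPolynomial σ R)} {s : σ →₀ ℕ} (h : monomial s 1 ∈ M) (a : R) :
    monomial s a ∈ M := by
  simpa only [smul_monomial, smul_eq_mul, mul_one] using M.smul_mem a h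

theorem Finsupp.weight_sub_single_add_single {σ : Type*} (w : σ → ℕ) {d : σ →₀ ℕ} {i : σ}
    (hi : d i ≠ 0) (j : σ) :
    weight w (d - single i 1 + single j 1) + w i = weight w d + w j := by
  conv_rhs => rw [← sub_add_single_one_cancel hi]
  simp only [map_add, weight_single, one_smul]
  omega

namespace ModpDerivation

variable {p : ℕ}

def predSat (j : Fin p) : Fin p := ⟨j.val - 1, lt_of_le_of_lt (Nat.sub_le j.val 1) j.isLt⟩

def last (hp : 0 < p) : Fin p := ⟨p - 1, Nat.sub_lt hp Nat.one_pos⟩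

abbrev varWeight : Fin p → ℕ := fun j => j.val + 1

noncomputable def energy : (Fin p →₀ ℕ) →+ ℕ := weight fun j : Fin p => j.val * (p - j.val)

theorem weight_lower {s : Fin p →₀ ℕ} {i : Fin p} (hs : s i ≠ 0) (hi : i.val ≠ 0) :
    weight varWeight (s - single i 1 + single (predSat i) 1) + 1 = weight varWeight s := by
  have := weight_sub_single_add_single varWeight hs (predSat i)
  have hpred : (predSat i).val = i.val - 1 := rfl
  dsimp only [varWeight] at this
  omega

theorem weight_raise {d : Fin p →₀ ℕ} {k k' : Fin p} (hk' : k'.val = k.val + 1)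
    (hdk : d k ≠ 0) :
    weight varWeight (d - single k 1 + single k' 1) = weight varWeight d + 1 := by
  have := weight_sub_single_add_single varWeight hdk k'
  dsimp only [varWeight] at this
  omega

theorem lower_ne_single_last (hp : 0 < p) (s : Fin p →₀ ℕ) {i : Fin p} (hi : i.val ≠ 0) :
    s - single i 1 + single (predSat i) 1 ≠ single (last hp) 1 := by
  intro h
  have hne : last hp ≠ predSat i := Fin.ne_of_val_ne (by simp only [last, predSat]; omega)
  have := congrArg (· (predSat i)) h
  simp only [Finsupp.add_apply, single_eq_same, single_eq_of_ne' hne] at this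
  omega

theorem val_add_one_lt_of_mem_support (hp : 0 < p) {d : Fin p →₀ ℕ}
    (hd : weight varWeight d = p) (hne : d ≠ single (last hp) 1) {j : Fin p}
    (hj : j ∈ d.support) : j.val + 1 < p := by
  rw [Finsupp.mem_support_iff] at hj
  have hwt := congrArg (weight varWeight) (sub_add_single_one_cancel hj)
  rw [map_add, weight_single, one_smul, hd] at hwt
  dsimp only [varWeight] at hwt
  refine lt_of_le_of_ne (by omega) fun hjp => hne ?_
  have hjl : j = last hp := Fin.ext (by simp only [last]; omega)
  have hzero : d - single j 1 = 0 := by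
    ext l
    by_contra hl
    have := le_weight_of_ne_zero' varWeight hl
    dsimp only [varWeight] at this
    omega
  rw [← hjl, ← sub_add_single_one_cancel hj, hzero, zero_add]

theorem concave_step {p k i : ℕ} (hi : 1 ≤ i) (hik : i ≤ k) (hkp : k + 1 < p) :
    (k + 1) * (p - (k + 1)) + (i - 1) * (p - (i - 1)) < k * (p - k) + i * (p - i) := by
  have hk : k ≤ p := by omega
  have hip : i ≤ p := by omega
  have hi1 : i - 1 ≤ p := by omega
  zify [hi, hkp.le, hk, hip, hi1]
  nlinarith

theorem energy_lower_raise_lt {d : Fin p →₀ ℕ} {k k' i : Fin p} (hk' : k'.val = k.val + 1)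
    (hdk : d k ≠ 0) (hi : (d - single k 1 + single k' 1 : Fin p →₀ ℕ) i ≠ 0) (hi0 : i.val ≠ 0)
    (hik : i.val ≤ k.val) :
    energy (d - single k 1 + single k' 1 - single i 1 + single (predSat i) 1) < energy d := by
  have hraise := weight_sub_single_add_single (fun j : Fin p => j.val * (p - j.val)) hdk k'
  have hlower := weight_sub_single_add_single (fun j : Fin p => j.val * (p - j.val)) hi
    (predSat i)
  have hpred : (predSat i).val = i.val - 1 := rfl
  have hstep := concave_step (Nat.one_le_iff_ne_zero.2 hi0) hik (hk' ▸ k'.isLt)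
  rw [hpred] at hlower
  rw [hk'] at hraise
  simp only [energy]
  omega

section image_le

variable {R : Type*} [CommRing R]

theorem map_le_span (hp : 0 < p)
    {D : Derivation R (MvPolynomial (Fin p) R) (MvPolynomial (Fin p) R)}
    (hX : ∀ j : Fin p, D (X j) = C (-(j.val : R)) * X (predSat j)) :
    Submodule.map D.toLinearMap (weightedHomogeneousSubmodule R varWeight (p + 1)) ≤
      Submodule.span R {f | ∃ d : Fin p →₀ ℕ,
        weight varWeight d = p ∧ d ≠ single (last hp) 1 ∧ f = monomial d 1} := by
  rw [Submodule.map_le_iff_le_comap]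
  intro f hf
  rw [← support_sum_monomial_coeff f]
  refine Submodule.sum_mem _ fun s hs => monomial_mem_of_monomial_one_mem ?_ _
  have hs : weight varWeight s = p + 1 := hf (MvPolynomial.mem_support_iff.1 hs)
  rw [Submodule.mem_comap, Derivation.coeFn_coe, derivation_monomial_one hX s]
  refine Submodule.sum_mem _ fun i hi => ?_
  rw [Finsupp.mem_support_iff] at hi
  rcases eq_or_ne i.val 0 with hi0 | hi0
  · simp [hi0]
  refine monomial_mem_of_monomial_one_mem (Submodule.subset_span ?_) _
  refine ⟨_, ?_, lower_ne_single_last hp s hi0, rfl⟩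
  have := weight_lower hi hi0
  omega

theorem derivation_monomial_raise
    {D : Derivation R (MvPolynomial (Fin p) R) (MvPolynomial (Fin p) R)}
    (hX : ∀ j : Fin p, D (X j) = C (-(j.val : R)) * X (predSat j)) {d : Fin p →₀ ℕ}
    {k k' : Fin p} (hk' : k'.val = k.val + 1) (hdk : d k ≠ 0) (hdk' : d k' = 0) :
    D (monomial (d - single k 1 + single k' 1) 1) = monomial d (-(k'.val : R)) +
      ∑ i ∈ (d - single k 1 + single k' 1).support.erase k',
        monomial (d - single k 1 + single k' 1 - single i 1 + single (predSat i) 1)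
          ((d - single k 1 + single k' 1 : Fin p →₀ ℕ) i * -(i.val : R)) := by
  have hμk' : (d - single k 1 + single k' 1 : Fin p →₀ ℕ) k' = 1 := by
    simp [hdk', single_eq_of_ne' (Fin.ne_of_val_ne (by omega) : k ≠ k')]
  have hpred : predSat k' = k := Fin.ext (show k'.val - 1 = k.val by omega)
  have hmem : k' ∈ (d - single k 1 + single k' 1).support :=
    Finsupp.mem_support_iff.2 (by rw [hμk']; exact one_ne_zero)
  rw [derivation_monomial_one hX, ← Finset.add_sum_erase _ _ hmem, hμk', hpred, add_tsub_cancel_right, sub_add_single_one_cancel hdk,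
    Nat.cast_one, one_mul]

end image_le

section le_image

variable {K : Type*} [Field K] [CharP K p]

theorem monomial_mem_map (hp : 0 < p)
    {D : Derivation K (MvPolynomial (Fin p) K) (MvPolynomial (Fin p) K)}
    (hX : ∀ j : Fin p, D (X j) = C (-(j.val : K)) * X (predSat j)) {d : Fin p →₀ ℕ}
    (hd : weight varWeight d = p) (hne : d ≠ single (last hp) 1) :
    monomial d 1 ∈
      Submodule.map D.toLinearMap (weightedHomogeneousSubmodule K varWeight (p + 1)) := by
  set M := Submodule.map D.toLinearMap (weightedHomogeneousSubmodule K varWeight (p + 1))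
  induction hn : energy d using Nat.strong_induction_on generalizing d with
  | _ n ih =>
  have hsupp : d.support.Nonempty :=
    Finsupp.support_nonempty_iff.2 (by rintro rfl; rw [map_zero] at hd; omega)
  set k := d.support.max' hsupp
  have hdk : d k ≠ 0 := Finsupp.mem_support_iff.1 (d.support.max'_mem hsupp)
  have hkp : k.val + 1 < p := val_add_one_lt_of_mem_support hp hd hne (d.support.max'_mem hsupp)
  set k' : Fin p := ⟨k.val + 1, hkp⟩
  have hk'k : k'.val = k.val + 1 := rfl
  have hdk' : d k' = 0 := Finsupp.notMem_support_iff.1 fun h => by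
    have : k'.val ≤ k.val := d.support.le_max' k' h
    omega
  have hD := derivation_monomial_raise hX hk'k hdk hdk'
  set μ := d - single k 1 + single k' 1
  have hwμ : weight varWeight μ = p + 1 := by rw [weight_raise hk'k hdk, hd]
  have hrest : ∀ i ∈ μ.support.erase k',
      monomial (μ - single i 1 + single (predSat i) 1) (μ i * -(i.val : K)) ∈ M := by
    intro i hi
    obtain ⟨hik', hμi⟩ := Finset.mem_erase.1 hi
    rw [Finsupp.mem_support_iff] at hμi
    rcases eq_or_ne i.val 0 with hi0 | hi0
    · simp [hi0]
    have hdi : i ∈ d.support := by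
      rw [Finsupp.mem_support_iff]
      simp only [μ, Finsupp.add_apply, Finsupp.tsub_apply, single_eq_of_ne' hik'.symm] at hμi
      omega
    refine monomial_mem_of_monomial_one_mem (ih _ ?_ ?_ (lower_ne_single_last hp μ hi0) rfl) _
    · rw [← hn]
      exact energy_lower_raise_lt hk'k hdk hμi hi0 (d.support.le_max' i hdi)
    · have := weight_lower hμi hi0
      omega
  have hμM : D (monomial μ 1) ∈ M :=
    ⟨monomial μ 1, isWeightedHomogeneous_monomial _ _ _ hwμ, rfl⟩
  rw [hD] at hμM
  have hd_mem : monomial d (-(k'.val : K)) ∈ M := by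
    simpa only [add_sub_cancel_right] using M.sub_mem hμM (M.sum_mem hrest)
  have hunit : (-(k'.val : K)) ≠ 0 := by
    rw [neg_ne_zero, Ne, CharP.cast_eq_zero_iff K p]
    exact fun h => absurd (Nat.le_of_dvd (Nat.succ_pos _) h) (by omega)
  rw [← inv_mul_cancel₀ hunit, ← smul_eq_mul, ← smul_monomial]
  exact M.smul_mem _ hd_mem

end le_image

end ModpDerivation

theorem image_of_modp_derivation_general (p : ℕ) (hp : p.Prime)
    (D : Derivation (ZMod p) (MvPolynomial (Fin p) (ZMod p)) (MvPolynomial (Fin p) (ZMod p)))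
    (hD1 : D (X (⟨0, hp.pos⟩ : Fin p)) = 0)
    (hDk : ∀ j : Fin p, j.val ≠ 0 →
      D (X j) = C ((1 : ZMod p) - ((j.val : ZMod p) + 1)) *
        X (⟨j.val - 1, lt_of_le_of_lt (Nat.sub_le j.val 1) j.isLt⟩ : Fin p)) :
    Submodule.map D.toLinearMap
        (weightedHomogeneousSubmodule (ZMod p) (fun j : Fin p => j.val + 1) (p + 1))
      = Submodule.span (ZMod p)
          { f : MvPolynomial (Fin p) (ZMod p) |
            ∃ d : Fin p →₀ ℕ,
              Finsupp.weight (fun j : Fin p => j.val + 1) d = p ∧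
              d ≠ Finsupp.single (⟨p - 1, Nat.sub_lt hp.pos Nat.one_pos⟩ : Fin p) 1 ∧
              f = monomial d 1 } := by
  have : Fact p.Prime := ⟨hp⟩
  have hX : ∀ j : Fin p, D (X j) = C (-(j.val : ZMod p)) * X (ModpDerivation.predSat j) := by
    intro j
    rcases eq_or_ne j.val 0 with hj | hj
    · rw [show j = ⟨0, hp.pos⟩ from Fin.ext hj, hD1]
      simp
    · rw [hDk j hj]
      congr 2
      ring
  refine le_antisymm (ModpDerivation.map_le_span hp.pos hX) (Submodule.span_le.2 ?_)
  rintro _ ⟨d, hd, hne, rfl⟩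
  exact ModpDerivation.monomial_mem_map hp.pos hX hd hne

/-- Let `p` be an odd prime.  On `𝔽_p[X_1, …, X_p]` (with `X_k` indexed by `k - 1 : Fin p`),
let `D̄` be the (unique) derivation with `D̄(X_1) = 0` and `D̄(X_k) = (1 - k) · X_{k-1}` for
`2 ≤ k ≤ p`, and grade the ring by giving `X_k` the weight `k`.  Then the image under `D̄` of
the submodule of weighted-homogeneous polynomials of weighted degree `p + 1` is exactly the
`𝔽_p`-span of the weighted-degree-`p` monomials other than `X_p`. -/
theorem image_of_modp_derivation (p : ℕ) (hp : p.Prime) (hodd : Odd p)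
    (D : Derivation (ZMod p) (MvPolynomial (Fin p) (ZMod p)) (MvPolynomial (Fin p) (ZMod p)))
    (hD1 : D (X (⟨0, hp.pos⟩ : Fin p)) = 0)
    (hDk : ∀ j : Fin p, j.val ≠ 0 →
      D (X j) = C ((1 : ZMod p) - ((j.val : ZMod p) + 1)) *
        X (⟨j.val - 1, lt_of_le_of_lt (Nat.sub_le j.val 1) j.isLt⟩ : Fin p)) :
    Submodule.map D.toLinearMap
        (weightedHomogeneousSubmodule (ZMod p) (fun j : Fin p => j.val + 1) (p + 1))
      = Submodule.span (ZMod p)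
          { f : MvPolynomial (Fin p) (ZMod p) |
            ∃ d : Fin p →₀ ℕ,
              Finsupp.weight (fun j : Fin p => j.val + 1) d = p ∧
              d ≠ Finsupp.single (⟨p - 1, Nat.sub_lt hp.pos Nat.one_pos⟩ : Fin p) 1 ∧
              f = monomial d 1 } :=
  image_of_modp_derivation_general p hp D hD1 hDk
end
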